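/- Let w ∈ S_n and let J(M_w) denote the set of down-closed subsets (order ideals) of the subposet M_w of ℕ^n, ordered by inclusion. Then the map sending x ∈ c(Λ_w) to {z ∈ M_w : z ≤ x in the product order} is an order isomorphism from (c(Λ_w), product order) onto (J(M_w), ⊆). -/

import Mathlib

/-- The inversion set of `w`: pairs of positions `(i,j)` with `i < j` and `w i > w j`. -/
def Invs {n : ℕ} (w : Equiv.Perm (Fin n)) : Finset (Fin n × Fin n) :=
  Finset.univ.filter (fun p => p.1 < p.2 ∧ w p.2 < w p.1)

/-- The length (number of inversions) of `w`. -/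
def len {n : ℕ} (w : Equiv.Perm (Fin n)) : ℕ := (Invs w).card

/-- The `i`-th entry of the Lehmer code of `w`. -/
def lehmer {n : ℕ} (w : Equiv.Perm (Fin n)) (i : Fin n) : ℕ :=
  ((Invs w).filter (fun p => p.1 = i)).card

/-- The extended Lehmer code `m_{i,j}(w)`: the number of inversions `(i,k)` with `k < j`. -/
def mext {n : ℕ} (w : Equiv.Perm (Fin n)) (i : Fin n) (j : Fin (n + 1)) : ℕ :=
  ((Invs w).filter (fun p => p.1 = i ∧ (p.2 : ℕ) < (j : ℕ))).card

/-- The left weak order: `v ≤_L w` iff `inv(v) ⊆ inv(w)`. -/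
def leftWeak {n : ℕ} (v w : Equiv.Perm (Fin n)) : Prop := Invs v ⊆ Invs w

/-- The value of `w` extended to `Fin (n+1)` by fixing the last point
(the `1`-indexed convention `w(n+1) = n+1` becomes `wval w n = n` here). -/
def wval {n : ℕ} (w : Equiv.Perm (Fin n)) (j : Fin (n + 1)) : ℕ :=
  if h : (j : ℕ) < n then (w ⟨j, h⟩ : ℕ) else n

/-- The set of non-inversions of `w`: pairs `(i,j)` with `i ≤ j ≤ n+1` and `w i ≤ w j`,
where `w` is extended by fixing the last point. -/
def Ninvs {n : ℕ} (w : Equiv.Perm (Fin n)) : Finset (Fin n × Fin (n + 1)) :=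
  Finset.univ.filter (fun p => (p.1 : ℕ) ≤ (p.2 : ℕ) ∧ (w p.1 : ℕ) ≤ wval w p.2)

/-- The set of Lehmer codes of elements of the weak order interval `Λ_w = [id, w]`. -/
def codeSet {n : ℕ} (w : Equiv.Perm (Fin n)) : Set (Fin n → ℕ) :=
  {x | ∃ v : Equiv.Perm (Fin n), leftWeak v w ∧ lehmer v = x}

/-- The tuple `b_{i,x}(w)`: the `j`-th coordinate is `0` if `j < i` or `(i,j) ∈ inv(w)`,
and is `max {0, x - m_{i,j}(w)}` (truncated subtraction) if `j ≥ i` and `(i,j) ∈ ninv(w)`. -/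
def bmin {n : ℕ} (w : Equiv.Perm (Fin n)) (i : Fin n) (x : ℕ) : Fin n → ℕ :=
  fun j => if (i : ℕ) ≤ (j : ℕ) ∧ (w i : ℕ) ≤ (w j : ℕ) then x - mext w i j.castSucc else 0

/-- The set `M_w` of all `b_{i,x}(w)` for `1 ≤ x ≤ c_i(w)`. -/
def Mset {n : ℕ} (w : Equiv.Perm (Fin n)) : Set (Fin n → ℕ) :=
  {z | ∃ (i : Fin n) (x : ℕ), 1 ≤ x ∧ x ≤ lehmer w i ∧ z = bmin w i x}

/-- The direct sum `v × w ∈ S_{m+n}` of permutations. -/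
def dsum {m n : ℕ} (v : Equiv.Perm (Fin m)) (w : Equiv.Perm (Fin n)) :
    Equiv.Perm (Fin (m + n)) :=
  finSumFinEquiv.permCongr (Equiv.sumCongr v w)


/-!
A tuple `x` lies in `c(Λ_w)` iff `x_i ≤ c_i(w)` for all `i` and `x_i ≤ x_j + m_{i,j}(w)` for
every non-inversion `(i,j)` of `w`. Necessity is a count of inversions. For sufficiency, `x` is the
Lehmer code of some `v`, and a pair of `inv(v) \ inv(w)` with maximal first entry would violate
the inequality at that pair.

For such `x` one has `b_{i,t}(w) ≤ x ↔ t ≤ x_i`, so the ideal below `x` determines `x`, and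
`x_i = max {t ≤ c_i(w) : b_{i,t}(w) ∈ S}` inverts the map on an arbitrary ideal `S`: the
inequalities hold because `b_{j, t - m_{i,j}(w)}(w) ≤ b_{i,t}(w)`.
-/

open Finset

section
variable {n : ℕ} {v w : Equiv.Perm (Fin n)} {i j : Fin n}

lemma mem_Invs : (i, j) ∈ Invs w ↔ i < j ∧ w j < w i := by
  simp [Invs]

lemma mext_eq_card (w : Equiv.Perm (Fin n)) (i : Fin n) (l : Fin (n + 1)) :
    mext w i l = #{k | i < k ∧ w k < w i ∧ (k : ℕ) < l} := by
  rw [mext, eq_comm, ← card_map ⟨Prod.mk i, Prod.mk_right_injective i⟩]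
  congr 1
  ext ⟨a, b⟩
  simp only [mem_filter, mem_Invs, mem_map, mem_univ, true_and, Function.Embedding.coeFn_mk,
    Prod.mk.injEq]
  aesop

lemma lehmer_eq_mext_last (w : Equiv.Perm (Fin n)) (i : Fin n) :
    lehmer w i = mext w i (Fin.last n) := by
  simp [lehmer, mext]

lemma lehmer_eq_card (w : Equiv.Perm (Fin n)) (i : Fin n) :
    lehmer w i = #{k | i < k ∧ w k < w i} := by
  simp [lehmer_eq_mext_last, mext_eq_card]

lemma mext_castSucc_self (w : Equiv.Perm (Fin n)) (i : Fin n) : mext w i i.castSucc = 0 := by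
  simp only [mext_eq_card, Fin.val_castSucc, card_eq_zero, filter_eq_empty_iff]
  intro k _ ⟨hik, _, hki⟩
  exact (Fin.lt_def.1 hik).not_gt hki

lemma lehmer_add_lt (w : Equiv.Perm (Fin n)) (i : Fin n) : lehmer w i + i < n := by
  have : lehmer w i ≤ #(Ioi i) := lehmer_eq_card w i ▸ card_le_card fun k hk => by
    simpa using (mem_filter.1 hk).2.1
  rw [Fin.card_Ioi] at this
  omega

lemma lehmer_mono (h : Invs v ⊆ Invs w) (i : Fin n) : lehmer v i ≤ lehmer w i :=
  card_le_card (filter_subset_filter _ h)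

lemma apply_le_apply_of_Invs_subset (h : Invs v ⊆ Invs w) (hij : i ≤ j) (hw : w i ≤ w j) :
    v i ≤ v j := by
  by_contra! hv
  have hij : i < j := hij.lt_of_ne (by rintro rfl; exact hv.false)
  exact (mem_Invs.1 (h (mem_Invs.2 ⟨hij, hv⟩))).2.not_ge hw

theorem mext_le_mext_add_mext (h : Invs v ⊆ Invs w) (hij : i ≤ j) (hw : w i ≤ w j)
    (l : Fin (n + 1)) : mext v i l ≤ mext w i j.castSucc + mext v j l := by
  have hv := apply_le_apply_of_Invs_subset h hij hw
  rw [mext_eq_card, mext_eq_card, mext_eq_card, Fin.val_castSucc,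
    ← card_filter_add_card_filter_not (p := fun k : Fin n => k < j), filter_filter,
    filter_filter]
  refine add_le_add (card_le_card fun k hk => ?_) (card_le_card fun k hk => ?_) <;>
    simp only [mem_filter, mem_univ, true_and, not_lt] at hk ⊢
  · exact ⟨hk.1.1, (mem_Invs.1 (h (mem_Invs.2 ⟨hk.1.1, hk.1.2.1⟩))).2, hk.2⟩
  · have hvk : v k < v j := hk.1.2.1.trans_le hv
    exact ⟨hk.2.lt_of_ne (by rintro rfl; exact hvk.false), hvk, hk.1.2.2⟩

theorem lehmer_le_lehmer_add_mext (h : Invs v ⊆ Invs w) (hij : i ≤ j) (hw : w i ≤ w j) :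
    lehmer v i ≤ lehmer v j + mext w i j.castSucc := by
  simpa [lehmer_eq_mext_last, add_comm] using mext_le_mext_add_mext h hij hw (Fin.last n)

lemma lehmer_add_mext_lt (hij : i < j) (hv : v j < v i)
    (hbetween : ∀ k, i < k → k < j → w k < w i → v k < v i) :
    lehmer v j + mext w i j.castSucc < lehmer v i := by
  rw [lehmer_eq_card, lehmer_eq_card, mext_eq_card, Fin.val_castSucc, add_comm,
    ← card_filter_add_card_filter_not (s := {k | i < k ∧ v k < v i}) (p := fun k => k < j),
    filter_filter, filter_filter]
  refine add_lt_add_of_le_of_lt (card_le_card fun k hk => ?_) (card_lt_card ?_)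
  · simp only [mem_filter, mem_univ, true_and] at hk ⊢
    exact ⟨⟨hk.1, hbetween k hk.1 hk.2.2 hk.2.1⟩, hk.2.2⟩
  · refine (ssubset_iff_of_subset fun k hk => ?_).2 ⟨j, by simp [hij, hv], by simp⟩
    simp only [mem_filter, mem_univ, true_and, not_lt] at hk ⊢
    exact ⟨⟨hij.trans hk.1, hk.2.trans hv⟩, hk.1.le⟩

theorem Invs_subset_of_lehmer_le_lehmer_add_mext
    (hC : ∀ i j, i ≤ j → w i ≤ w j → lehmer v i ≤ lehmer v j + mext w i j.castSucc) :
    Invs v ⊆ Invs w := by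
  by_contra hne
  obtain ⟨⟨i, j⟩, hp, hmax⟩ :=
    exists_max_image (Invs v \ Invs w) (fun p => p.1) (sdiff_nonempty.2 hne)
  rw [mem_sdiff, mem_Invs, mem_Invs, not_and, not_lt] at hp
  obtain ⟨⟨hij, hv⟩, hw⟩ := hp
  have hw : w i < w j := (hw hij).lt_of_ne (w.injective.ne hij.ne)
  refine (hC i j hij.le hw.le).not_gt (lehmer_add_mext_lt hij hv fun k hik hkj hwk => ?_)
  by_contra! hvk
  have hkj : (k, j) ∈ Invs v \ Invs w :=
    mem_sdiff.2 ⟨mem_Invs.2 ⟨hkj, hv.trans_le hvk⟩,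
      fun h => (hwk.trans hw).not_gt (mem_Invs.1 h).2⟩
  exact (hmax _ hkj).not_gt hik

lemma eq_of_Invs_eq {u v : Equiv.Perm (Fin n)} (h : Invs u = Invs v) : u = v := by
  have hlt : ∀ i j, u i < u j → v i < v j := by
    intro i j huij
    rcases lt_trichotomy i j with hij | rfl | hji
    · have hv : ¬ v j < v i := fun hv =>
        (mem_Invs.1 (h ▸ mem_Invs.2 ⟨hij, hv⟩ : (i, j) ∈ Invs u)).2.not_gt huij
      exact (not_lt.1 hv).lt_of_ne (v.injective.ne hij.ne)
    · exact absurd huij (lt_irrefl _)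
    · exact (mem_Invs.1 (h ▸ mem_Invs.2 ⟨hji, huij⟩ : (j, i) ∈ Invs v)).2
  have hmono : StrictMono (v ∘ u.symm) := fun a b hab => by
    simpa using hlt (u.symm a) (u.symm b) (by simpa using hab)
  refine Equiv.ext fun i => ?_
  simpa using (congrFun hmono.eq_id (u i)).symm

lemma lehmer_injective : Function.Injective (lehmer (n := n)) := by
  have key : ∀ u v : Equiv.Perm (Fin n), lehmer u = lehmer v → Invs u ⊆ Invs v :=
    fun u v h => Invs_subset_of_lehmer_le_lehmer_add_mext fun i j hij hw =>
      h ▸ lehmer_le_lehmer_add_mext subset_rfl hij hw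
  exact fun u v h => eq_of_Invs_eq ((key u v h).antisymm (key v u h.symm))

/-- The Lehmer code is injective and both `S_n` and `∏ i, [0, n - 1 - i]` have `n!` elements. -/
theorem exists_lehmer_eq {x : Fin n → ℕ} (hx : ∀ i, x i + i < n) :
    ∃ v : Equiv.Perm (Fin n), lehmer v = x := by
  have hcard : #(Fintype.piFinset fun i : Fin n => range (n - i)) ≤
      #(univ : Finset (Equiv.Perm (Fin n))) := by
    rw [Fintype.card_piFinset, card_univ, Fintype.card_perm, Fintype.card_fin]
    simp [Fin.prod_univ_eq_prod_range (fun i => n - i), ← Nat.descFactorial_eq_prod_range,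
      Nat.descFactorial_self]
  obtain ⟨v, -, hv⟩ := surj_on_of_inj_on_of_card_le (fun v _ => lehmer v)
    (fun v _ => Fintype.mem_piFinset.2 fun i => mem_range.2 (by have := lehmer_add_lt v i; omega))
    (fun _ _ _ _ h => lehmer_injective h) hcard x
    (Fintype.mem_piFinset.2 fun i => mem_range.2 (by have := hx i; omega))
  exact ⟨v, hv.symm⟩

theorem mem_codeSet_iff {x : Fin n → ℕ} :
    x ∈ codeSet w ↔ (∀ i, x i ≤ lehmer w i) ∧
      ∀ i j, i ≤ j → w i ≤ w j → x i ≤ x j + mext w i j.castSucc := by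
  constructor
  · rintro ⟨v, hv, rfl⟩
    exact ⟨lehmer_mono hv, fun i j => lehmer_le_lehmer_add_mext hv⟩
  · rintro ⟨hle, hC⟩
    obtain ⟨v, rfl⟩ :=
      exists_lehmer_eq fun i => (Nat.add_le_add_right (hle i) _).trans_lt (lehmer_add_lt w i)
    exact ⟨v, Invs_subset_of_lehmer_le_lehmer_add_mext hC, rfl⟩

end

section
variable {n : ℕ} {w : Equiv.Perm (Fin n)} {i j : Fin n} {t : ℕ} {x y : Fin n → ℕ}

lemma bmin_apply_self (w : Equiv.Perm (Fin n)) (i : Fin n) (t : ℕ) : bmin w i t i = t := by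
  simp [bmin, mext_castSucc_self]

lemma bmin_mono (w : Equiv.Perm (Fin n)) (i : Fin n) : Monotone (bmin w i) := by
  intro t t' h j
  simp only [bmin]
  split <;> omega

lemma bmin_sub_mext_le_bmin (hij : i ≤ j) (hw : w i ≤ w j) (t : ℕ) :
    bmin w j (t - mext w i j.castSucc) ≤ bmin w i t := by
  intro l
  simp only [bmin, Fin.val_fin_le]
  by_cases hjl : j ≤ l ∧ w j ≤ w l
  · rw [if_pos hjl, if_pos ⟨hij.trans hjl.1, hw.trans hjl.2⟩]
    have := mext_le_mext_add_mext subset_rfl hij hw l.castSucc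
    omega
  · simp [hjl]

lemma bmin_le_iff (hx : x ∈ codeSet w) : bmin w i t ≤ x ↔ t ≤ x i := by
  refine ⟨fun h => bmin_apply_self w i t ▸ h i, fun h j => ?_⟩
  simp only [bmin, Fin.val_fin_le]
  split
  · next hij => have := (mem_codeSet_iff.1 hx).2 i j hij.1 hij.2; omega
  · exact Nat.zero_le _

theorem le_iff_Mset_inter_Iic_subset (hx : x ∈ codeSet w) (hy : y ∈ codeSet w) :
    x ≤ y ↔ {z ∈ Mset w | z ≤ x} ⊆ {z ∈ Mset w | z ≤ y} := by
  refine ⟨fun h z hz => ⟨hz.1, hz.2.trans h⟩, fun h i => ?_⟩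
  rcases Nat.eq_zero_or_pos (x i) with h0 | hpos
  · simp [h0]
  have hb : bmin w i (x i) ∈ Mset w := ⟨i, x i, hpos, (mem_codeSet_iff.1 hx).1 i, rfl⟩
  exact (bmin_le_iff hy).1 (h ⟨hb, (bmin_le_iff hx).2 le_rfl⟩).2

end

section
variable {n : ℕ} {w : Equiv.Perm (Fin n)} {S : Set (Fin n → ℕ)} {i : Fin n} {t : ℕ}

noncomputable def codeOfIdeal (w : Equiv.Perm (Fin n)) (S : Set (Fin n → ℕ)) (i : Fin n) :
    ℕ :=
  open Classical in Nat.findGreatest (fun t => bmin w i t ∈ S) (lehmer w i)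

lemma bmin_mem_iff_le_codeOfIdeal (hS : ∀ a ∈ Mset w, ∀ b ∈ S, a ≤ b → a ∈ S)
    (ht₁ : 1 ≤ t) (ht : t ≤ lehmer w i) : bmin w i t ∈ S ↔ t ≤ codeOfIdeal w S i := by
  classical
  refine ⟨Nat.le_findGreatest (P := fun t => bmin w i t ∈ S) ht, fun h => ?_⟩
  have hmax : bmin w i (codeOfIdeal w S i) ∈ S :=
    Nat.findGreatest_of_ne_zero (P := fun t => bmin w i t ∈ S) rfl (by omega)
  exact hS _ ⟨i, t, ht₁, ht, rfl⟩ _ hmax (bmin_mono w i h)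

lemma codeOfIdeal_le_lehmer (w : Equiv.Perm (Fin n)) (S : Set (Fin n → ℕ)) (i : Fin n) :
    codeOfIdeal w S i ≤ lehmer w i := by
  classical
  exact Nat.findGreatest_le _

theorem codeOfIdeal_mem_codeSet (hS : ∀ a ∈ Mset w, ∀ b ∈ S, a ≤ b → a ∈ S) :
    codeOfIdeal w S ∈ codeSet w := by
  refine mem_codeSet_iff.2 ⟨codeOfIdeal_le_lehmer w S, fun i j hij hw => ?_⟩
  by_contra! h
  have hxi : codeOfIdeal w S i ≤ lehmer w i := codeOfIdeal_le_lehmer w S i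
  have hlehmer := lehmer_le_lehmer_add_mext subset_rfl hij hw
  have hbi : bmin w i (codeOfIdeal w S i) ∈ S :=
    (bmin_mem_iff_le_codeOfIdeal hS (by omega) hxi).2 le_rfl
  have hbj : bmin w j (codeOfIdeal w S i - mext w i j.castSucc) ∈ S :=
    hS _ ⟨j, _, by omega, by omega, rfl⟩ _ hbi (bmin_sub_mext_le_bmin hij hw _)
  have := (bmin_mem_iff_le_codeOfIdeal hS (by omega) (by omega)).1 hbj
  omega

theorem Mset_inter_Iic_codeOfIdeal (hSM : S ⊆ Mset w)
    (hS : ∀ a ∈ Mset w, ∀ b ∈ S, a ≤ b → a ∈ S) :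
    {z ∈ Mset w | z ≤ codeOfIdeal w S} = S := by
  have hx := codeOfIdeal_mem_codeSet hS
  ext z
  constructor
  · rintro ⟨⟨i, t, ht₁, ht, rfl⟩, hz⟩
    exact (bmin_mem_iff_le_codeOfIdeal hS ht₁ ht).2 ((bmin_le_iff hx).1 hz)
  · intro hz
    obtain ⟨i, t, ht₁, ht, rfl⟩ := hSM hz
    exact ⟨hSM hz, (bmin_le_iff hx).2 ((bmin_mem_iff_le_codeOfIdeal hS ht₁ ht).1 hz)⟩

end

/-- Theorem 4.13(b): the map `x ↦ {z ∈ M_w : z ≤ x}` is an order isomorphism from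
`(c(Λ_w), product order)` onto the poset `(J(M_w), ⊆)` of down-closed subsets (order
ideals) of the subposet `M_w` of `ℕ^n`: it is order-reflecting/preserving and a
bijection onto the set of order ideals of `M_w`. -/
theorem codeSet_orderIso_ideals {n : ℕ} (w : Equiv.Perm (Fin n)) :
    (∀ x ∈ codeSet w, ∀ y ∈ codeSet w,
      (x ≤ y ↔ {z ∈ Mset w | z ≤ x} ⊆ {z ∈ Mset w | z ≤ y})) ∧
    (∀ S : Set (Fin n → ℕ), S ⊆ Mset w →
      (∀ a ∈ Mset w, ∀ b ∈ S, a ≤ b → a ∈ S) →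
      ∃! x : Fin n → ℕ, x ∈ codeSet w ∧ {z ∈ Mset w | z ≤ x} = S) := by
  refine ⟨fun x hx y hy => le_iff_Mset_inter_Iic_subset hx hy, fun S hSM hS => ?_⟩
  have hx := codeOfIdeal_mem_codeSet hS
  have hxS := Mset_inter_Iic_codeOfIdeal hSM hS
  refine ⟨codeOfIdeal w S, ⟨hx, hxS⟩, fun y ⟨hy, hyS⟩ => le_antisymm ?_ ?_⟩
  · exact (le_iff_Mset_inter_Iic_subset hy hx).2 (hyS.trans hxS.symm).le
  · exact (le_iff_Mset_inter_Iic_subset hx hy).2 (hxS.trans hyS.symm).le
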